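/- Let G be a finite abelian group, S ⊆ G, Σ ⊆ Ĝ, and let P_S, Q_Σ be as above with A = ‖Q_Σ P_S‖. Then the following are equivalent: (1) A < 1; (2) there exists D > 0 such that ‖f‖_{L²} ≤ D ‖f̂‖_{L²(Ĝ∖Σ)} for every f supported in S; (3) there exists C such that ‖f‖_{L²} ≤ C(‖f‖_{L²(G∖S)} + ‖f̂‖_{L²(Ĝ∖Σ)}) for all f. Moreover when A < 1 one can take D = (1−A²)^{-1/2} and D ≤ C ≤ D + 1. -/

import Mathlib

/-!
Plancherel holds because the characters, normalised to unit length, form an orthonormal basis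
of `ℓ²(G)`. For `g` supported in `S` it splits `‖g‖² = ‖ĝ‖²_Σ + ‖ĝ‖²_{Ĝ∖Σ}`, and
`‖ĝ‖_Σ = ‖Q_Σ P_S g‖ ≤ A ‖g‖`; hence `(1 - A²) ‖g‖² ≤ ‖ĝ‖²_{Ĝ∖Σ}`, which is (2) with
`D = (1 - A²)^{-1/2}`. Conversely (2), with `D ≥ 1`, bounds
`‖Q_Σ P_S f‖² = ‖P_S f‖² - ‖(P_S f)^‖²_{Ĝ∖Σ}` by `(1 - D⁻²) ‖f‖²`. For (2) ⇒ (3) write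
`f = P_S f + P_{G∖S} f` and use the triangle inequality with `‖(P_{G∖S} f)^‖ = ‖f‖_{G∖S}`;
(3) ⇒ (2) is the case of `f` supported in `S`.
-/

open Finset ComplexConjugate

/-- ℓ²-norm of `f` over the finite set `T`. -/
noncomputable def l2norm {α : Type*} (T : Finset α) (f : α → ℂ) : ℝ :=
  Real.sqrt (∑ x ∈ T, ‖f x‖ ^ 2)

/-- ℓ^p-norm (p a real exponent) of `f` over the finite set `T`. -/
noncomputable def lpnorm {α : Type*} (p : ℝ) (T : Finset α) (f : α → ℂ) : ℝ :=
  (∑ x ∈ T, ‖f x‖ ^ p) ^ (1 / p)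

/-- The unitary Fourier transform on a finite abelian group:
`f̂(χ) = |G|^{-1/2} ∑_x f x * conj (χ x)`. -/
noncomputable def dft {G : Type*} [AddCommGroup G] [Fintype G]
    (f : G → ℂ) (χ : AddChar G ℂ) : ℂ :=
  (Real.sqrt (Fintype.card G) : ℂ)⁻¹ * ∑ x, f x * conj (χ x)

/-- The inverse Fourier transform on a finite abelian group. -/
noncomputable def idft {G : Type*} [AddCommGroup G] [Fintype G]
    (g : AddChar G ℂ → ℂ) (x : G) : ℂ :=
  (Real.sqrt (Fintype.card G) : ℂ)⁻¹ * ∑ χ, g χ * χ x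

/-- The ℓ²-operator norm of a map `T` on functions on a finite type. -/
noncomputable def opNorm2 {α : Type*} [Fintype α] (T : (α → ℂ) → (α → ℂ)) : ℝ :=
  sSup ((fun f => l2norm Finset.univ (T f)) '' {f | l2norm Finset.univ f ≤ 1})

lemma le_sqrt_mul_of_sq_le {x y c : ℝ} (hc : 0 ≤ c) (hy : 0 ≤ y) (h : x ^ 2 ≤ c * y ^ 2) :
    x ≤ √c * y := by
  rw [← Real.sqrt_sq hy, ← Real.sqrt_mul hc]
  exact (le_abs_self x).trans (Real.abs_le_sqrt h)

section L2
variable {α : Type*}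

lemma l2norm_nonneg (T : Finset α) (f : α → ℂ) : 0 ≤ l2norm T f :=
  Real.sqrt_nonneg _

lemma l2norm_sq (T : Finset α) (f : α → ℂ) : l2norm T f ^ 2 = ∑ x ∈ T, ‖f x‖ ^ 2 :=
  Real.sq_sqrt (Finset.sum_nonneg fun _ _ => by positivity)

lemma l2norm_eq_norm (T : Finset α) (f : α → ℂ) :
    l2norm T f = ‖(WithLp.toLp 2 fun x : T => f x : EuclideanSpace ℂ T)‖ := by
  rw [EuclideanSpace.norm_eq, l2norm, ← Finset.sum_coe_sort T]

lemma l2norm_univ_eq_norm [Fintype α] (f : α → ℂ) :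
    l2norm univ f = ‖(WithLp.toLp 2 f : EuclideanSpace ℂ α)‖ := by
  rw [EuclideanSpace.norm_eq, l2norm]

lemma l2norm_sub_le (T : Finset α) (f g : α → ℂ) :
    l2norm T (f - g) ≤ l2norm T f + l2norm T g := by
  rw [l2norm_eq_norm, l2norm_eq_norm, l2norm_eq_norm,
    show (fun x : T => (f - g) x) = (fun x : T => f x) - (fun x : T => g x) from rfl,
    WithLp.toLp_sub]
  exact norm_sub_le _ _

lemma l2norm_mono {T T' : Finset α} (h : T ⊆ T') (f : α → ℂ) : l2norm T f ≤ l2norm T' f :=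
  Real.sqrt_le_sqrt (Finset.sum_le_sum_of_subset_of_nonneg h fun _ _ _ => by positivity)

lemma l2norm_eq_zero_of_forall {T : Finset α} {f : α → ℂ} (h : ∀ x ∈ T, f x = 0) :
    l2norm T f = 0 := by
  rw [l2norm, Finset.sum_eq_zero fun x hx => by rw [h x hx, norm_zero, sq, mul_zero],
    Real.sqrt_zero]

variable [DecidableEq α]

/-- The projection `P_T f = 1_T f`. -/
def indicatorₗ (T : Finset α) : (α → ℂ) →ₗ[ℂ] (α → ℂ) where
  toFun f x := if x ∈ T then f x else 0
  map_add' f g := by ext x; by_cases hx : x ∈ T <;> simp [hx]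
  map_smul' c f := by ext x; by_cases hx : x ∈ T <;> simp [hx]

lemma indicatorₗ_apply (T : Finset α) (f : α → ℂ) (x : α) :
    indicatorₗ T f x = if x ∈ T then f x else 0 := rfl

lemma indicatorₗ_eq_self {T : Finset α} {f : α → ℂ} (hf : ∀ x, x ∉ T → f x = 0) :
    indicatorₗ T f = f := by
  ext x
  by_cases hx : x ∈ T <;> simp [indicatorₗ_apply, hx, hf]

lemma l2norm_indicatorₗ (T T' : Finset α) (f : α → ℂ) :
    l2norm T' (indicatorₗ T f) = l2norm (T' ∩ T) f := by
  simp only [l2norm, indicatorₗ_apply, apply_ite (‖·‖ ^ 2), norm_zero, ne_eq,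
    OfNat.ofNat_ne_zero, not_false_eq_true, zero_pow, Finset.sum_ite_mem]

variable [Fintype α]

lemma l2norm_sq_add_l2norm_compl_sq (T : Finset α) (f : α → ℂ) :
    l2norm T f ^ 2 + l2norm Tᶜ f ^ 2 = l2norm univ f ^ 2 := by
  rw [l2norm_sq, l2norm_sq, l2norm_sq, Finset.sum_add_sum_compl]

lemma l2norm_univ_le_add_compl (T : Finset α) (f : α → ℂ) :
    l2norm univ f ≤ l2norm T f + l2norm Tᶜ f := by
  refine le_of_pow_le_pow_left₀ two_ne_zero
    (add_nonneg (l2norm_nonneg _ _) (l2norm_nonneg _ _)) ?_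
  rw [← l2norm_sq_add_l2norm_compl_sq T f]
  nlinarith [l2norm_nonneg T f, l2norm_nonneg Tᶜ f]

lemma indicatorₗ_add_indicatorₗ_compl (T : Finset α) (f : α → ℂ) :
    indicatorₗ T f + indicatorₗ Tᶜ f = f := by
  ext x
  by_cases hx : x ∈ T <;> simp [indicatorₗ_apply, hx]

end L2

section OpNorm2
variable {α : Type*} [Fintype α]

noncomputable def LinearMap.toL2CLM (T : (α → ℂ) →ₗ[ℂ] (α → ℂ)) :
    EuclideanSpace ℂ α →L[ℂ] EuclideanSpace ℂ α :=
  LinearMap.toContinuousLinearMap ((WithLp.linearEquiv 2 ℂ (α → ℂ)).symm.conj T)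

lemma LinearMap.toL2CLM_toLp (T : (α → ℂ) →ₗ[ℂ] (α → ℂ)) (f : α → ℂ) :
    T.toL2CLM (WithLp.toLp 2 f) = WithLp.toLp 2 (T f) := rfl

lemma opNorm2_eq_norm_toL2CLM (T : (α → ℂ) →ₗ[ℂ] (α → ℂ)) : opNorm2 T = ‖T.toL2CLM‖ := by
  rw [← ContinuousLinearMap.sSup_unitClosedBall_eq_norm, opNorm2]
  congr 1
  ext r
  simp only [Set.mem_image, Set.mem_ofPred_eq, Metric.mem_closedBall, dist_zero_right]
  constructor
  · rintro ⟨f, hf, rfl⟩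
    exact ⟨WithLp.toLp 2 f, by rwa [← l2norm_univ_eq_norm], by
      rw [T.toL2CLM_toLp, l2norm_univ_eq_norm]⟩
  · rintro ⟨v, hv, rfl⟩
    exact ⟨v.ofLp, by rwa [l2norm_univ_eq_norm], by
      rw [l2norm_univ_eq_norm, ← T.toL2CLM_toLp, WithLp.toLp_ofLp]⟩

lemma opNorm2_nonneg (T : (α → ℂ) →ₗ[ℂ] (α → ℂ)) : 0 ≤ opNorm2 T :=
  opNorm2_eq_norm_toL2CLM T ▸ norm_nonneg _

lemma l2norm_apply_le_opNorm2_mul (T : (α → ℂ) →ₗ[ℂ] (α → ℂ)) (f : α → ℂ) :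
    l2norm univ (T f) ≤ opNorm2 T * l2norm univ f := by
  rw [opNorm2_eq_norm_toL2CLM, l2norm_univ_eq_norm, l2norm_univ_eq_norm, ← T.toL2CLM_toLp]
  exact T.toL2CLM.le_opNorm _

lemma opNorm2_le_of_forall_le {T : (α → ℂ) →ₗ[ℂ] (α → ℂ)} {M : ℝ} (hM : 0 ≤ M)
    (h : ∀ f, l2norm univ (T f) ≤ M * l2norm univ f) : opNorm2 T ≤ M := by
  rw [opNorm2_eq_norm_toL2CLM]
  refine T.toL2CLM.opNorm_le_bound hM fun v => ?_
  simpa only [l2norm_univ_eq_norm, T.toL2CLM_toLp, WithLp.toLp_ofLp] using h v.ofLp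

end OpNorm2

section Fourier
variable {G : Type*} [AddCommGroup G] [Fintype G]

variable (G) in
noncomputable def charVector (χ : AddChar G ℂ) : EuclideanSpace ℂ G :=
  (Real.sqrt (Fintype.card G) : ℂ)⁻¹ • WithLp.toLp 2 (χ : G → ℂ)

lemma orthonormal_charVector : Orthonormal ℂ (charVector G) := by
  classical
  rw [orthonormal_iff_ite]
  intro χ ψ
  have hN : ((Real.sqrt (Fintype.card G) : ℂ)⁻¹) * (Real.sqrt (Fintype.card G) : ℂ)⁻¹
      * Fintype.card G = 1 := by
    rw [← mul_inv, ← Complex.ofReal_mul, Real.mul_self_sqrt (Nat.cast_nonneg _),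
      Complex.ofReal_natCast, inv_mul_cancel₀ (Nat.cast_ne_zero.2 Fintype.card_ne_zero)]
  have hsum : ∑ x, ψ x * conj (χ x) = if χ = ψ then (Fintype.card G : ℂ) else 0 := by
    have h : ∀ x, ψ x * conj (χ x) = (ψ * χ⁻¹) x := fun x => by
      rw [AddChar.mul_apply, AddChar.inv_apply', AddChar.inv_apply_eq_conj]
    simp_rw [h, AddChar.sum_eq_ite, ← AddChar.one_eq_zero, mul_inv_eq_one, eq_comm]
  simp only [charVector, inner_smul_left, inner_smul_right, PiLp.inner_apply,
    RCLike.inner_apply, map_inv₀, Complex.conj_ofReal, hsum, mul_ite, mul_zero, ← mul_assoc, hN]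

variable (G) in
noncomputable def charBasis : OrthonormalBasis (AddChar G ℂ) ℂ (EuclideanSpace ℂ G) :=
  (basisOfOrthonormalOfCardEqFinrank orthonormal_charVector
    (by rw [finrank_euclideanSpace, AddChar.card_eq])).toOrthonormalBasis
    (by rw [coe_basisOfOrthonormalOfCardEqFinrank]; exact orthonormal_charVector)

lemma charBasis_apply (χ : AddChar G ℂ) : charBasis G χ = charVector G χ := by
  rw [charBasis, Module.Basis.coe_toOrthonormalBasis, coe_basisOfOrthonormalOfCardEqFinrank]

lemma toLp_dft (f : G → ℂ) :
    WithLp.toLp 2 (dft f) = (charBasis G).repr (WithLp.toLp 2 f) := by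
  ext χ
  simp only [dft, Finset.mul_sum, OrthonormalBasis.repr_apply_apply, charBasis_apply, charVector,
    inner_smul_left, map_inv₀, Complex.conj_ofReal, PiLp.inner_apply, RCLike.inner_apply]

lemma toLp_idft (g : AddChar G ℂ → ℂ) :
    WithLp.toLp 2 (idft g) = (charBasis G).repr.symm (WithLp.toLp 2 g) := by
  rw [← OrthonormalBasis.sum_repr_symm]
  ext x
  simp only [idft, Finset.mul_sum, mul_left_comm, charBasis_apply, charVector, WithLp.ofLp_sum,
    WithLp.ofLp_smul, Finset.sum_apply, Pi.smul_apply, smul_eq_mul]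

lemma l2norm_dft (f : G → ℂ) : l2norm univ (dft f) = l2norm univ f := by
  rw [l2norm_univ_eq_norm, l2norm_univ_eq_norm, toLp_dft, LinearIsometryEquiv.norm_map]

lemma l2norm_idft (g : AddChar G ℂ → ℂ) : l2norm univ (idft g) = l2norm univ g := by
  rw [l2norm_univ_eq_norm, l2norm_univ_eq_norm, toLp_idft, LinearIsometryEquiv.norm_map]

noncomputable def dftₗ : (G → ℂ) →ₗ[ℂ] (AddChar G ℂ → ℂ) where
  toFun := dft
  map_add' f g := by
    ext χ
    simp only [dft, Pi.add_apply, add_mul, Finset.sum_add_distrib, mul_add]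
  map_smul' c f := by
    ext χ
    simp only [dft, Pi.smul_apply, smul_eq_mul, mul_assoc, ← Finset.mul_sum, RingHom.id_apply]
    ring

noncomputable def idftₗ : (AddChar G ℂ → ℂ) →ₗ[ℂ] (G → ℂ) where
  toFun := idft
  map_add' f g := by
    ext x
    simp only [idft, Pi.add_apply, add_mul, Finset.sum_add_distrib, mul_add]
  map_smul' c f := by
    ext x
    simp only [idft, Pi.smul_apply, smul_eq_mul, mul_assoc, ← Finset.mul_sum, RingHom.id_apply]
    ring

end Fourier

section AnnihilatingPair
variable {G : Type*} [AddCommGroup G] [Fintype G] [DecidableEq G]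
  (S : Finset G) (Sig : Finset (AddChar G ℂ))

/-- The operator `Q_Σ P_S`. -/
noncomputable def annihilatingPairOp : (G → ℂ) →ₗ[ℂ] (G → ℂ) :=
  idftₗ ∘ₗ indicatorₗ Sig ∘ₗ dftₗ ∘ₗ indicatorₗ S

lemma l2norm_annihilatingPairOp (f : G → ℂ) :
    l2norm univ (annihilatingPairOp S Sig f) = l2norm Sig (dft (indicatorₗ S f)) := by
  rw [annihilatingPairOp, LinearMap.comp_apply, idftₗ, LinearMap.coe_mk, AddHom.coe_mk,
    l2norm_idft, LinearMap.comp_apply, l2norm_indicatorₗ, Finset.univ_inter]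
  rfl

variable {S Sig}

lemma l2norm_le_of_opNorm2_lt_one (hA : opNorm2 (annihilatingPairOp S Sig) < 1)
    {f : G → ℂ} (hf : ∀ x, x ∉ S → f x = 0) :
    l2norm univ f ≤ (√(1 - opNorm2 (annihilatingPairOp S Sig) ^ 2))⁻¹ * l2norm Sigᶜ (dft f) := by
  set A := opNorm2 (annihilatingPairOp S Sig)
  have hA0 : 0 ≤ A := opNorm2_nonneg _
  have hlow : l2norm Sig (dft f) ≤ A * l2norm univ f := by
    have := l2norm_apply_le_opNorm2_mul (annihilatingPairOp S Sig) f
    rwa [l2norm_annihilatingPairOp, indicatorₗ_eq_self hf] at this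
  have hsplit := l2norm_sq_add_l2norm_compl_sq Sig (dft f)
  rw [l2norm_dft] at hsplit
  rw [← Real.sqrt_inv]
  refine le_sqrt_mul_of_sq_le (inv_nonneg.2 (by nlinarith)) (l2norm_nonneg _ _) ?_
  rw [← div_eq_inv_mul, le_div_iff₀ (by nlinarith)]
  nlinarith [pow_le_pow_left₀ (l2norm_nonneg _ _) hlow 2, l2norm_nonneg univ f]

lemma opNorm2_annihilatingPairOp_le {D : ℝ} (hD : 1 ≤ D)
    (h : ∀ f : G → ℂ, (∀ x, x ∉ S → f x = 0) → l2norm univ f ≤ D * l2norm Sigᶜ (dft f)) :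
    opNorm2 (annihilatingPairOp S Sig) ≤ √(1 - (D ^ 2)⁻¹) := by
  have hD2 : (D ^ 2)⁻¹ ≤ 1 := inv_le_one_of_one_le₀ (one_le_pow₀ hD)
  refine opNorm2_le_of_forall_le (Real.sqrt_nonneg _) fun f => ?_
  refine le_sqrt_mul_of_sq_le (by linarith) (l2norm_nonneg _ _) ?_
  set g := indicatorₗ S f
  have hg : l2norm univ g ≤ D * l2norm Sigᶜ (dft g) :=
    h g fun x hx => by simp [g, indicatorₗ_apply, hx]
  have hsplit := l2norm_sq_add_l2norm_compl_sq Sig (dft g)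
  rw [l2norm_dft] at hsplit
  have hgf : l2norm univ g ≤ l2norm univ f := by
    rw [l2norm_indicatorₗ, Finset.univ_inter]
    exact l2norm_mono (Finset.subset_univ S) f
  have hgD : (D ^ 2)⁻¹ * l2norm univ g ^ 2 ≤ l2norm Sigᶜ (dft g) ^ 2 := by
    rw [inv_mul_le_iff₀ (by positivity), ← mul_pow]
    exact pow_le_pow_left₀ (l2norm_nonneg _ _) hg 2
  have hgf2 := mul_le_mul_of_nonneg_left (pow_le_pow_left₀ (l2norm_nonneg _ _) hgf 2)
    (sub_nonneg.2 hD2)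
  rw [l2norm_annihilatingPairOp]
  linarith

lemma opNorm2_annihilatingPairOp_lt_one {D : ℝ}
    (h : ∀ f : G → ℂ, (∀ x, x ∉ S → f x = 0) → l2norm univ f ≤ D * l2norm Sigᶜ (dft f)) :
    opNorm2 (annihilatingPairOp S Sig) < 1 := by
  refine (opNorm2_annihilatingPairOp_le (le_max_right D 1) fun f hf => ?_).trans_lt ?_
  · exact (h f hf).trans (mul_le_mul_of_nonneg_right (le_max_left D 1) (l2norm_nonneg _ _))
  · rw [Real.sqrt_lt' one_pos]
    have : 0 < (max D 1 ^ 2)⁻¹ := by positivity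
    linarith

lemma l2norm_le_of_forall_supported {D : ℝ} (hD : 0 ≤ D)
    (h : ∀ f : G → ℂ, (∀ x, x ∉ S → f x = 0) → l2norm univ f ≤ D * l2norm Sigᶜ (dft f))
    (f : G → ℂ) :
    l2norm univ f ≤ (D + 1) * (l2norm Sᶜ f + l2norm Sigᶜ (dft f)) := by
  set g := indicatorₗ S f
  set k := indicatorₗ Sᶜ f
  have hg : l2norm univ g ≤ D * l2norm Sigᶜ (dft g) :=
    h g fun x hx => by simp [g, indicatorₗ_apply, hx]
  have hdft : dft g = dft f - dft k := by
    refine eq_sub_of_add_eq ?_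
    change dftₗ g + dftₗ k = dftₗ f
    rw [← map_add, indicatorₗ_add_indicatorₗ_compl]
  have hk : l2norm Sigᶜ (dft k) ≤ l2norm Sᶜ f := by
    refine (l2norm_mono (Finset.subset_univ _) _).trans_eq ?_
    rw [l2norm_dft, l2norm_indicatorₗ, Finset.univ_inter]
  have hgc : l2norm Sigᶜ (dft g) ≤ l2norm Sigᶜ (dft f) + l2norm Sᶜ f := by
    rw [hdft]
    exact (l2norm_sub_le _ _ _).trans (add_le_add le_rfl hk)
  have hfg : l2norm univ f ≤ l2norm univ g + l2norm Sᶜ f := by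
    rw [l2norm_indicatorₗ, Finset.univ_inter]
    exact l2norm_univ_le_add_compl S f
  calc l2norm univ f ≤ l2norm univ g + l2norm Sᶜ f := hfg
    _ ≤ D * (l2norm Sigᶜ (dft f) + l2norm Sᶜ f) + l2norm Sᶜ f := by
      gcongr
      exact hg.trans (mul_le_mul_of_nonneg_left hgc hD)
    _ ≤ (D + 1) * (l2norm Sᶜ f + l2norm Sigᶜ (dft f)) := by
      linarith [l2norm_nonneg Sigᶜ (dft f)]

end AnnihilatingPair

/-- with `A = ‖Q_Σ P_S‖`, the conditions (1) `A < 1`, (2) existence of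
`D` with `‖f‖ ≤ D ‖f̂‖_{ℓ²(Ĝ∖Σ)}` for `f` supported in `S`, and (3) the strong
annihilating inequality, are equivalent; moreover when `A < 1` one can take
`D = (1-A²)^{-1/2}` and some `C` with `D ≤ C ≤ D + 1`. -/
theorem stmt12 {G : Type} [AddCommGroup G] [Fintype G] [DecidableEq G]
    (S : Finset G) (Sig : Finset (AddChar G ℂ))
    (A : ℝ)
    (hA : A = opNorm2 (fun f : G → ℂ =>
      idft (fun χ => if χ ∈ Sig then
        dft (fun x => if x ∈ S then f x else 0) χ else 0))) :
    ((A < 1 ↔ ∃ D > 0, ∀ f : G → ℂ, (∀ x, x ∉ S → f x = 0) →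
        l2norm Finset.univ f ≤ D * l2norm Sigᶜ (dft f)) ∧
     (A < 1 ↔ ∃ C : ℝ, ∀ f : G → ℂ,
        l2norm Finset.univ f ≤ C * (l2norm Sᶜ f + l2norm Sigᶜ (dft f))) ∧
     (A < 1 →
        (∀ f : G → ℂ, (∀ x, x ∉ S → f x = 0) →
          l2norm Finset.univ f ≤ (Real.sqrt (1 - A ^ 2))⁻¹ * l2norm Sigᶜ (dft f)) ∧
        ∃ C : ℝ, (Real.sqrt (1 - A ^ 2))⁻¹ ≤ C ∧ C ≤ (Real.sqrt (1 - A ^ 2))⁻¹ + 1 ∧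
          ∀ f : G → ℂ,
            l2norm Finset.univ f ≤ C * (l2norm Sᶜ f + l2norm Sigᶜ (dft f)))) := by
  change A = opNorm2 (annihilatingPairOp S Sig) at hA
  subst hA
  set A := opNorm2 (annihilatingPairOp S Sig)
  have hDpos : A < 1 → 0 < (√(1 - A ^ 2))⁻¹ := fun hA1 =>
    inv_pos.2 (Real.sqrt_pos.2 (by nlinarith [opNorm2_nonneg (annihilatingPairOp S Sig)]))
  have hstrong : A < 1 → ∀ f : G → ℂ, l2norm univ f ≤
      ((√(1 - A ^ 2))⁻¹ + 1) * (l2norm Sᶜ f + l2norm Sigᶜ (dft f)) := fun hA1 =>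
    l2norm_le_of_forall_supported (hDpos hA1).le fun _ hf => l2norm_le_of_opNorm2_lt_one hA1 hf
  refine ⟨⟨fun hA1 => ⟨_, hDpos hA1, fun _ => l2norm_le_of_opNorm2_lt_one hA1⟩,
      fun ⟨_, _, h⟩ => opNorm2_annihilatingPairOp_lt_one h⟩,
    ⟨fun hA1 => ⟨_, hstrong hA1⟩, fun ⟨C, hC⟩ => opNorm2_annihilatingPairOp_lt_one (D := C)
      fun f hf => ?_⟩,
    fun hA1 => ⟨fun _ => l2norm_le_of_opNorm2_lt_one hA1,
      _, le_add_of_nonneg_right zero_le_one, le_rfl, hstrong hA1⟩⟩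
  have hSc : l2norm Sᶜ f = 0 := l2norm_eq_zero_of_forall fun x hx => hf x (Finset.mem_compl.1 hx)
  simpa [hSc] using hC f
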